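/- arXiv:2506.10761 — 4 statements merged into one kernel-verified Lean document; each statement's English description precedes it below -/
import Mathlib

section
/- Let A be an m×m real matrix with Aᵀ = −A, and suppose that for every x ∈ Ω the vector div(f∇u)(x) := ∂₁(f·∂₁u)(x) + ∂₂(f·∂₂u)(x) ∈ ℝ^m is orthogonal to A·u(x). Then for every x ∈ Ω one has the conservation law ∂₁(f·⟪∂₁u, A·u⟫)(x) + ∂₂(f·⟪∂₂u, A·u⟫)(x) = 0. (This is the paper's Conservation Law Lemma 2.5: for a p-harmonic map u into a homogeneous Riemannian manifold 𝒩 ⊂ ℝ^m and A in the Lie algebra of the isometry group of 𝒩, div(f∇u)(x) is normal to 𝒩 at u(x) while A·u(x) is tangent, which is exactly the orthogonality hypothesis.) -/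
open scoped RealInnerProductSpace

open Matrix

lemma skew_inner {m : ℕ} (A : Matrix (Fin m) (Fin m) ℝ) (hA : A.transpose = -A)
    (v : EuclideanSpace ℝ (Fin m)) : ⟪v, Matrix.toEuclideanLin A v⟫ = 0 := by
  have h1 : ⟪v, Matrix.toEuclideanLin A v⟫ =
      dotProduct (WithLp.equiv 2 _ v) (A *ᵥ (WithLp.equiv 2 _ v)) := by
    simp [EuclideanSpace.inner_eq_star_dotProduct, Matrix.toEuclideanLin_apply,
      dotProduct, mul_comm]
  have h2 : dotProduct (WithLp.equiv 2 _ v) (A *ᵥ (WithLp.equiv 2 _ v))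
      = -dotProduct (WithLp.equiv 2 _ v) (A *ᵥ (WithLp.equiv 2 _ v)) := by
    conv_lhs => rw [Matrix.dotProduct_mulVec, ← Matrix.mulVec_transpose, hA,
      Matrix.neg_mulVec, neg_dotProduct, dotProduct_comm]
  rw [h1]; linarith

/-- Partial derivative in the `i`-th coordinate direction of `ℝ²`
(the Fréchet derivative applied to the `i`-th standard basis vector). -/
noncomputable def pd {V : Type*} [NormedAddCommGroup V] [NormedSpace ℝ V]
    (i : Fin 2) (v : EuclideanSpace ℝ (Fin 2) → V) (x : EuclideanSpace ℝ (Fin 2)) : V :=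
  fderiv ℝ v x (EuclideanSpace.single i (1 : ℝ))

/-- Conservation Law Lemma 2.5: if `Aᵀ = -A` and `div(f∇u)(x)` is orthogonal to
`A·u(x)` for every `x ∈ Ω`, then `div(f⟪∇u, A·u⟫) = 0` on `Ω`. -/
theorem stmt_3 {m : ℕ} (Ω : Set (EuclideanSpace ℝ (Fin 2))) (hΩ : IsOpen Ω)
    (u : EuclideanSpace ℝ (Fin 2) → EuclideanSpace ℝ (Fin m))
    (hu : ContDiffOn ℝ 2 u Ω)
    (p : ℝ) (hp : 2 < p)
    (f : EuclideanSpace ℝ (Fin 2) → ℝ)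
    (hf : ∀ x, f x = (1 + (‖pd 0 u x‖ ^ 2 + ‖pd 1 u x‖ ^ 2)) ^ (p / 2 - 1))
    (A : Matrix (Fin m) (Fin m) ℝ) (hA : A.transpose = -A)
    (horth : ∀ x ∈ Ω,
      ⟪pd 0 (fun y => f y • pd 0 u y) x + pd 1 (fun y => f y • pd 1 u y) x,
        Matrix.toEuclideanLin A (u x)⟫ = 0) :
    ∀ x ∈ Ω,
      pd 0 (fun y => f y * ⟪pd 0 u y, Matrix.toEuclideanLin A (u y)⟫) x
        + pd 1 (fun y => f y * ⟪pd 1 u y, Matrix.toEuclideanLin A (u y)⟫) x = 0 := by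
  intro x hx
  set T : EuclideanSpace ℝ (Fin m) →L[ℝ] EuclideanSpace ℝ (Fin m) :=
    LinearMap.toContinuousLinearMap (Matrix.toEuclideanLin A) with hT
  have hTapp : ∀ w, Matrix.toEuclideanLin A w = T w := fun _ => rfl
  have hxu : ContDiffAt ℝ 2 u x := hu.contDiffAt (hΩ.mem_nhds hx)
  have hud : DifferentiableAt ℝ u x := hxu.differentiableAt (by norm_num)
  have hfd' : ContDiffAt ℝ 1 (fderiv ℝ u) x := hxu.fderiv_right (by norm_num)
  have hfdd : DifferentiableAt ℝ (fderiv ℝ u) x := hfd'.differentiableAt (by norm_num)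
  have hpdu : ∀ i : Fin 2, DifferentiableAt ℝ (pd i u) x := fun i =>
    hfdd.clm_apply (differentiableAt_const _)
  -- differentiability of pd i u in a neighbourhood, for f's differentiability
  have hpduO : ∀ i : Fin 2, ∀ y ∈ Ω, DifferentiableAt ℝ (pd i u) y := by
    intro i y hy
    have hxu' : ContDiffAt ℝ 2 u y := hu.contDiffAt (hΩ.mem_nhds hy)
    exact ((hxu'.fderiv_right (m := 1) (by norm_num)).differentiableAt
      (by norm_num)).clm_apply (differentiableAt_const _)
  have hfdiff : DifferentiableAt ℝ f x := by
    have hfe : f = fun y => (1 + (‖pd 0 u y‖ ^ 2 + ‖pd 1 u y‖ ^ 2)) ^ (p / 2 - 1) :=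
      funext hf
    rw [hfe]
    have hg : DifferentiableAt ℝ
        (fun y => 1 + (‖pd 0 u y‖ ^ 2 + ‖pd 1 u y‖ ^ 2)) x :=
      (differentiableAt_const _).add (((hpdu 0).norm_sq ℝ).add ((hpdu 1).norm_sq ℝ))
    exact hg.rpow_const (Or.inl (by positivity))
  -- Au and its derivative
  have hAud : DifferentiableAt ℝ (fun y => Matrix.toEuclideanLin A (u y)) x := by
    simp only [hTapp]
    exact T.differentiable.differentiableAt.comp x hud
  have hAufd : ∀ e, fderiv ℝ (fun y => Matrix.toEuclideanLin A (u y)) x e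
      = Matrix.toEuclideanLin A (fderiv ℝ u x e) := by
    intro e
    have : fderiv ℝ (fun y => T (u y)) x = T.comp (fderiv ℝ u x) :=
      (T.hasFDerivAt.comp x hud.hasFDerivAt).fderiv
    simp only [hTapp, this]; rfl
  -- inner products differentiability
  have hinner : ∀ i : Fin 2, DifferentiableAt ℝ
      (fun y => ⟪pd i u y, Matrix.toEuclideanLin A (u y)⟫) x := fun i =>
    (hpdu i).inner ℝ hAud
  have key : ∀ i : Fin 2,
      pd i (fun y => f y * ⟪pd i u y, Matrix.toEuclideanLin A (u y)⟫) x
      = f x * ⟪fderiv ℝ (pd i u) x (EuclideanSpace.single i 1),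
            Matrix.toEuclideanLin A (u x)⟫
        + (fderiv ℝ f x (EuclideanSpace.single i 1)) * ⟪pd i u x,
            Matrix.toEuclideanLin A (u x)⟫ := by
    intro i
    have hmul := fderiv_fun_mul hfdiff (hinner i)
    have e := EuclideanSpace.single i (1:ℝ)
    rw [pd, hmul]
    rw [ContinuousLinearMap.add_apply, ContinuousLinearMap.smul_apply,
      ContinuousLinearMap.smul_apply, smul_eq_mul, smul_eq_mul]
    rw [fderiv_inner_apply ℝ (hpdu i) hAud, hAufd]
    have hskew : ⟪pd i u x, Matrix.toEuclideanLin A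
        (fderiv ℝ u x (EuclideanSpace.single i 1))⟫ = 0 := by
      rw [show fderiv ℝ u x (EuclideanSpace.single i 1) = pd i u x from rfl]
      exact skew_inner A hA _
    rw [hskew]; ring
  -- expand hypothesis
  have hsm : ∀ i : Fin 2, pd i (fun y => f y • pd i u y) x
      = (fderiv ℝ f x (EuclideanSpace.single i 1)) • pd i u x
        + f x • fderiv ℝ (pd i u) x (EuclideanSpace.single i 1) := by
    intro i
    rw [pd, fderiv_fun_smul hfdiff (hpdu i)]
    rw [ContinuousLinearMap.add_apply, ContinuousLinearMap.smul_apply,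
      ContinuousLinearMap.smulRight_apply]
    abel
  have horth' := horth x hx
  rw [hsm 0, hsm 1] at horth'
  simp only [inner_add_left, real_inner_smul_left] at horth'
  rw [key 0, key 1]
  linarith
end

section
/- Suppose ‖u(x)‖ = 1 for all x ∈ Ω (u takes values in the unit sphere S^{m−1}) and that u is p-harmonic, i.e. for all x ∈ Ω: ∂₁(f·∂₁u)(x) + ∂₂(f·∂₂u)(x) + f(x)·‖∇u(x)‖²·u(x) = 0. Then for all indices i, j ∈ {1, …, m} and all x ∈ Ω one has the conservation law ∂₁( f·(u_i ∂₁u_j − u_j ∂₁u_i) )(x) + ∂₂( f·(u_i ∂₂u_j − u_j ∂₂u_i) )(x) = 0, i.e. div( f·(u ∧ ∇u) ) = 0. (This is the sphere case of the paper's Conservation Law Lemma 2.5, displayed explicitly in the paper for 𝒩 = Sⁿ with G = O(n+1).) -/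
open scoped RealInnerProductSpace

lemma pd_mul (k : Fin 2) {a b : EuclideanSpace ℝ (Fin 2) → ℝ} {x : EuclideanSpace ℝ (Fin 2)}
    (ha : DifferentiableAt ℝ a x) (hb : DifferentiableAt ℝ b x) :
    pd k (fun y => a y * b y) x = pd k a x * b x + a x * pd k b x := by
  unfold pd
  rw [fderiv_fun_mul ha hb]
  simp only [ContinuousLinearMap.add_apply, ContinuousLinearMap.smul_apply, smul_eq_mul]
  ring

lemma pd_sub (k : Fin 2) {a b : EuclideanSpace ℝ (Fin 2) → ℝ} {x : EuclideanSpace ℝ (Fin 2)}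
    (ha : DifferentiableAt ℝ a x) (hb : DifferentiableAt ℝ b x) :
    pd k (fun y => a y - b y) x = pd k a x - pd k b x := by
  unfold pd
  rw [fderiv_fun_sub ha hb]
  simp

lemma pd_smul {m : ℕ} (k : Fin 2) {a : EuclideanSpace ℝ (Fin 2) → ℝ}
    {w : EuclideanSpace ℝ (Fin 2) → EuclideanSpace ℝ (Fin m)} {x : EuclideanSpace ℝ (Fin 2)}
    (ha : DifferentiableAt ℝ a x) (hw : DifferentiableAt ℝ w x) :
    pd k (fun y => a y • w y) x = a x • pd k w x + pd k a x • w x := by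
  unfold pd
  rw [fderiv_fun_smul ha hw]
  simp

lemma pd_proj {m : ℕ} (k : Fin 2) (j : Fin m)
    {w : EuclideanSpace ℝ (Fin 2) → EuclideanSpace ℝ (Fin m)} {x : EuclideanSpace ℝ (Fin 2)}
    (hw : DifferentiableAt ℝ w x) :
    pd k (fun y => w y j) x = pd k w x j := by
  unfold pd
  have h : HasFDerivAt (fun y => w y j)
      ((EuclideanSpace.proj j (𝕜 := ℝ)).comp (fderiv ℝ w x)) x :=
    (EuclideanSpace.proj j (𝕜 := ℝ)).hasFDerivAt.comp x hw.hasFDerivAt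
  rw [h.fderiv]
  rfl

/-- Sphere case of the Conservation Law Lemma 2.5: if `u` takes values in the unit
sphere and is `p`-harmonic, then `div(f·(u ∧ ∇u)) = 0` componentwise on `Ω`. -/
theorem stmt_4 {m : ℕ} (Ω : Set (EuclideanSpace ℝ (Fin 2))) (hΩ : IsOpen Ω)
    (u : EuclideanSpace ℝ (Fin 2) → EuclideanSpace ℝ (Fin m))
    (hu : ContDiffOn ℝ 2 u Ω)
    (p : ℝ) (hp : 2 < p)
    (f : EuclideanSpace ℝ (Fin 2) → ℝ)
    (hf : ∀ x, f x = (1 + (‖pd 0 u x‖ ^ 2 + ‖pd 1 u x‖ ^ 2)) ^ (p / 2 - 1))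
    (hsph : ∀ x ∈ Ω, ‖u x‖ = 1)
    (hharm : ∀ x ∈ Ω,
      pd 0 (fun y => f y • pd 0 u y) x + pd 1 (fun y => f y • pd 1 u y) x
        + (f x * (‖pd 0 u x‖ ^ 2 + ‖pd 1 u x‖ ^ 2)) • u x = 0) :
    ∀ i j : Fin m, ∀ x ∈ Ω,
      pd 0 (fun y => f y * (u y i * pd 0 u y j - u y j * pd 0 u y i)) x
        + pd 1 (fun y => f y * (u y i * pd 1 u y j - u y j * pd 1 u y i)) x = 0 := by
  intro i j x hx
  have hxn : Ω ∈ nhds x := hΩ.mem_nhds hx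
  have hcu : ContDiffAt ℝ 2 u x := (hu x hx).contDiffAt hxn
  have hud : DifferentiableAt ℝ u x := hcu.differentiableAt two_ne_zero
  have hD : DifferentiableAt ℝ (fderiv ℝ u) x :=
    ((hcu.fderiv_right (m := 1) (le_refl 2)).differentiableAt one_ne_zero)
  have hg : ∀ k : Fin 2, DifferentiableAt ℝ (pd k u) x := fun k =>
    hD.clm_apply (differentiableAt_const _)
  -- differentiability of components
  have hcomp : ∀ l : Fin m, DifferentiableAt ℝ (fun y => u y l) x := fun l =>
    (EuclideanSpace.proj l (𝕜 := ℝ)).differentiableAt.comp x hud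
  have hgcomp : ∀ (k : Fin 2) (l : Fin m), DifferentiableAt ℝ (fun y => pd k u y l) x :=
    fun k l => (EuclideanSpace.proj l (𝕜 := ℝ)).differentiableAt.comp x (hg k)
  -- differentiability of f
  have hfd : DifferentiableAt ℝ f x := by
    have hfe : f = fun y => (1 + (‖pd 0 u y‖ ^ 2 + ‖pd 1 u y‖ ^ 2)) ^ (p / 2 - 1) := funext hf
    rw [hfe]
    have hn : ∀ k : Fin 2, DifferentiableAt ℝ (fun y => ‖pd k u y‖ ^ 2) x := fun k =>
      ((hg k).hasFDerivAt.norm_sq).differentiableAt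
    have hb : DifferentiableAt ℝ (fun y => 1 + (‖pd 0 u y‖ ^ 2 + ‖pd 1 u y‖ ^ 2)) x :=
      (differentiableAt_const _).add ((hn 0).add (hn 1))
    exact hb.rpow_const (Or.inl (by positivity))
  -- differentiability of the bracket
  have hq : ∀ k : Fin 2,
      DifferentiableAt ℝ (fun y => u y i * pd k u y j - u y j * pd k u y i) x := fun k =>
    ((hcomp i).mul (hgcomp k j)).sub ((hcomp j).mul (hgcomp k i))
  -- component form of the harmonic equation
  set c : ℝ := f x * (‖pd 0 u x‖ ^ 2 + ‖pd 1 u x‖ ^ 2) with hc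
  have hS : ∀ l : Fin m,
      (f x * pd 0 (pd 0 u) x l + pd 0 f x * pd 0 u x l)
        + (f x * pd 1 (pd 1 u) x l + pd 1 f x * pd 1 u x l) = -(c * u x l) := by
    intro l
    have h := hharm x hx
    have h0 := pd_smul 0 hfd (hg 0)
    have h1 := pd_smul 1 hfd (hg 1)
    rw [h0, h1] at h
    have h' := congrArg (fun v : EuclideanSpace ℝ (Fin m) => v l) h
    simp only [PiLp.add_apply, PiLp.smul_apply, PiLp.zero_apply, smul_eq_mul] at h'
    rw [← hc] at h'
    linarith
  -- expand the goal with the product rules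
  rw [pd_mul 0 hfd (hq 0), pd_mul 1 hfd (hq 1),
    pd_sub 0 ((hcomp i).fun_mul (hgcomp 0 j)) ((hcomp j).fun_mul (hgcomp 0 i)),
    pd_sub 1 ((hcomp i).fun_mul (hgcomp 1 j)) ((hcomp j).fun_mul (hgcomp 1 i)),
    pd_mul 0 (hcomp i) (hgcomp 0 j), pd_mul 0 (hcomp j) (hgcomp 0 i),
    pd_mul 1 (hcomp i) (hgcomp 1 j), pd_mul 1 (hcomp j) (hgcomp 1 i),
    pd_proj 0 i hud, pd_proj 0 j hud, pd_proj 1 i hud, pd_proj 1 j hud,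
    pd_proj 0 i (hg 0), pd_proj 0 j (hg 0), pd_proj 1 i (hg 1), pd_proj 1 j (hg 1)]
  have hSj := hS j
  have hSi := hS i
  linear_combination u x i * hSj - u x j * hSi
end

section
/- Suppose ‖u(x)‖ = 1 for all x ∈ Ω (u takes values in the unit sphere S^{m−1}) and that u is p-harmonic, i.e. for all x ∈ Ω: ∂₁(f·∂₁u)(x) + ∂₂(f·∂₂u)(x) + f(x)·‖∇u(x)‖²·u(x) = 0. Then the equation can be rewritten in div–curl (Jacobian) form: for every component i ∈ {1, …, m} and every x ∈ Ω, −( ∂₁(f·∂₁u_i)(x) + ∂₂(f·∂₂u_i)(x) ) = Σ_{j=1}^{m} [ f·(u_i ∂₁u_j − u_j ∂₁u_i)·∂₁u_j + f·(u_i ∂₂u_j − u_j ∂₂u_i)·∂₂u_j ](x). (This is the sphere case of the paper's Theorem 2.6, rewriting the p-harmonic map equation as a conservation law.) -/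
open scoped RealInnerProductSpace

/-- Sphere case of Theorem 2.6: a `p`-harmonic map into the unit sphere satisfies
the div–curl (Jacobian) form of the Euler–Lagrange equation. -/
theorem stmt_5 {m : ℕ} (Ω : Set (EuclideanSpace ℝ (Fin 2))) (hΩ : IsOpen Ω)
    (u : EuclideanSpace ℝ (Fin 2) → EuclideanSpace ℝ (Fin m))
    (hu : ContDiffOn ℝ 2 u Ω)
    (p : ℝ) (hp : 2 < p)
    (f : EuclideanSpace ℝ (Fin 2) → ℝ)
    (hf : ∀ x, f x = (1 + (‖pd 0 u x‖ ^ 2 + ‖pd 1 u x‖ ^ 2)) ^ (p / 2 - 1))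
    (hsph : ∀ x ∈ Ω, ‖u x‖ = 1)
    (hharm : ∀ x ∈ Ω,
      pd 0 (fun y => f y • pd 0 u y) x + pd 1 (fun y => f y • pd 1 u y) x
        + (f x * (‖pd 0 u x‖ ^ 2 + ‖pd 1 u x‖ ^ 2)) • u x = 0) :
    ∀ i : Fin m, ∀ x ∈ Ω,
      -(pd 0 (fun y => f y * pd 0 u y i) x + pd 1 (fun y => f y * pd 1 u y i) x)
        = ∑ j : Fin m,
            (f x * (u x i * pd 0 u x j - u x j * pd 0 u x i) * pd 0 u x j
              + f x * (u x i * pd 1 u x j - u x j * pd 1 u x i) * pd 1 u x j) := by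
  intro i x hx
  have hmem : Ω ∈ nhds x := hΩ.mem_nhds hx
  -- differentiability of pd k u
  have hfd : ContDiffOn ℝ 1 (fun y => fderiv ℝ u y) Ω :=
    hu.fderiv_of_isOpen hΩ (by norm_num)
  have hdu : ∀ k : Fin 2, DifferentiableAt ℝ (fun y => pd k u y) x := by
    intro k
    have h1 : DifferentiableAt ℝ (fun y => fderiv ℝ u y) x :=
      (hfd.differentiableOn one_ne_zero).differentiableAt hmem
    exact h1.clm_apply (differentiableAt_const _)
  have hux : DifferentiableAt ℝ u x :=
    (hu.differentiableOn (by norm_num)).differentiableAt hmem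
  -- differentiability of f
  have hg : DifferentiableAt ℝ
      (fun y => 1 + (‖pd 0 u y‖ ^ 2 + ‖pd 1 u y‖ ^ 2)) x :=
    (differentiableAt_const _).add (((hdu 0).norm_sq ℝ).add ((hdu 1).norm_sq ℝ))
  have hgpos : (0:ℝ) < 1 + (‖pd 0 u x‖ ^ 2 + ‖pd 1 u x‖ ^ 2) := by positivity
  have hfdiff : DifferentiableAt ℝ f x := by
    have : f = fun y => (1 + (‖pd 0 u y‖ ^ 2 + ‖pd 1 u y‖ ^ 2)) ^ (p / 2 - 1) :=
      funext hf
    rw [this]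
    exact hg.rpow_const (Or.inl (ne_of_gt hgpos))
  have hF : ∀ k : Fin 2, DifferentiableAt ℝ (fun y => f y • pd k u y) x :=
    fun k => hfdiff.smul (hdu k)
  -- component extraction
  have hcomp : ∀ k : Fin 2,
      pd k (fun y => f y * pd k u y i) x = (pd k (fun y => f y • pd k u y) x) i := by
    intro k
    have hL : (fun y => f y * pd k u y i)
        = fun y => (EuclideanSpace.proj (𝕜 := ℝ) i) (f y • pd k u y) := by
      funext y; simp [EuclideanSpace.proj]
    let L : EuclideanSpace ℝ (Fin m) →L[ℝ] ℝ := EuclideanSpace.proj i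
    have h2 : HasFDerivAt (fun y => L (f y • pd k u y))
        (L.comp (fderiv ℝ (fun y => f y • pd k u y) x)) x :=
      L.hasFDerivAt.comp x (hF k).hasFDerivAt
    rw [pd, hL, h2.fderiv]
    rfl
  -- harmonic equation componentwise
  have hkey := hharm x hx
  have hkey' : (pd 0 (fun y => f y • pd 0 u y) x) i + (pd 1 (fun y => f y • pd 1 u y) x) i
      + f x * (‖pd 0 u x‖ ^ 2 + ‖pd 1 u x‖ ^ 2) * u x i = 0 := by
    have := congrArg (fun v => v i) hkey
    simpa [mul_assoc] using this
  -- orthogonality : ⟪u x, pd k u x⟫ = 0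
  have horth : ∀ k : Fin 2, ⟪u x, pd k u x⟫ = 0 := by
    intro k
    have hev : (fun y => ⟪u y, u y⟫) =ᶠ[nhds x] fun _ => (1:ℝ) := by
      filter_upwards [hmem] with y hy
      rw [real_inner_self_eq_norm_sq, hsph y hy]; norm_num
    have hc : fderiv ℝ (fun y => ⟪u y, u y⟫) x = 0 := by
      rw [hev.fderiv_eq]; exact fderiv_const_apply 1
    have h3 := fderiv_inner_apply (𝕜 := ℝ) hux hux (EuclideanSpace.single k (1:ℝ))
    rw [hc] at h3
    simp only [ContinuousLinearMap.zero_apply] at h3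
    have h4 : ⟪pd k u x, u x⟫ = ⟪u x, pd k u x⟫ := real_inner_comm _ _
    rw [pd]
    linarith [h3, h4, real_inner_comm (u x) (fderiv ℝ u x (EuclideanSpace.single k 1))]
  have horth' : ∀ k : Fin 2, ∑ j : Fin m, u x j * pd k u x j = 0 := by
    intro k
    have := horth k
    rw [PiLp.inner_apply] at this
    simpa [mul_comm] using this
  have hnorm : ∀ k : Fin 2, ∑ j : Fin m, (pd k u x j) ^ 2 = ‖pd k u x‖ ^ 2 := by
    intro k
    rw [← real_inner_self_eq_norm_sq, PiLp.inner_apply]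
    simp [sq]
  -- expand RHS
  have expand : ∀ j : Fin m,
      f x * (u x i * pd 0 u x j - u x j * pd 0 u x i) * pd 0 u x j
        + f x * (u x i * pd 1 u x j - u x j * pd 1 u x i) * pd 1 u x j
      = (f x * u x i) * (pd 0 u x j) ^ 2 + (f x * u x i) * (pd 1 u x j) ^ 2
        - (f x * pd 0 u x i) * (u x j * pd 0 u x j)
        - (f x * pd 1 u x i) * (u x j * pd 1 u x j) := by
    intro j; ring
  rw [Finset.sum_congr rfl (fun j _ => expand j)]
  simp only [Finset.sum_sub_distrib, Finset.sum_add_distrib, ← Finset.mul_sum,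
    horth' 0, horth' 1, hnorm 0, hnorm 1, mul_zero, sub_zero]
  rw [hcomp 0, hcomp 1]
  nlinarith [hkey']
end

section
/- Let A¹, …, A^L be m×m real matrices and let Y¹, …, Y^L : ℝ^m → ℝ^m be C¹ maps. Assume: (i) (frame property along u) for every x ∈ Ω and every α ∈ {1,2}, ∂_αu(x) = Σ_{i=1}^{L} ⟪Aⁱ·u(x), ∂_αu(x)⟫ • Yⁱ(u(x)); and (ii) (conservation laws) for every i ∈ {1, …, L} and every x ∈ Ω, ∂₁( f·⟪∂₁u, Aⁱ·u⟫ )(x) + ∂₂( f·⟪∂₂u, Aⁱ·u⟫ )(x) = 0. Then for every x ∈ Ω one has the div–curl form of the equation: −( ∂₁(f·∂₁u)(x) + ∂₂(f·∂₂u)(x) ) = − Σ_{i=1}^{L} [ f·⟪∂₁u, Aⁱ·u⟫ · ∂₁(Yⁱ ∘ u) + f·⟪∂₂u, Aⁱ·u⟫ · ∂₂(Yⁱ ∘ u) ](x). (This is the paper's Theorem 2.6, Conservation Law: under the frame decomposition of Lemma 2.4 and the conservation laws of Lemma 2.5, −div((1+|∇u|²)^{p/2−1}∇u) = Σ_i ∇⊥Bⁱ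 · ∇Υⁱ with ∇⊥Bⁱ := −f⟪∇u, Aⁱu⟫ and Υⁱ := Yⁱ ∘ u.) -/
open scoped RealInnerProductSpace

lemma pd_congr {V : Type*} [NormedAddCommGroup V] [NormedSpace ℝ V]
    {g h : EuclideanSpace ℝ (Fin 2) → V} {x : EuclideanSpace ℝ (Fin 2)}
    (hgh : g =ᶠ[nhds x] h) (i : Fin 2) : pd i g x = pd i h x := by
  unfold pd; rw [hgh.fderiv_eq]

lemma pd_smul_s6 {V : Type*} [NormedAddCommGroup V] [NormedSpace ℝ V]
    (g : EuclideanSpace ℝ (Fin 2) → ℝ) (h : EuclideanSpace ℝ (Fin 2) → V)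
    {x : EuclideanSpace ℝ (Fin 2)} (hg : DifferentiableAt ℝ g x)
    (hh : DifferentiableAt ℝ h x) (i : Fin 2) :
    pd i (fun y => g y • h y) x = pd i g x • h x + g x • pd i h x := by
  unfold pd
  rw [fderiv_fun_smul hg hh]
  simp [add_comm]

lemma pd_sum {V : Type*} [NormedAddCommGroup V] [NormedSpace ℝ V] {ι : Type*}
    (s : Finset ι) (F : ι → EuclideanSpace ℝ (Fin 2) → V)
    {x : EuclideanSpace ℝ (Fin 2)} (hF : ∀ i ∈ s, DifferentiableAt ℝ (F i) x) (α : Fin 2) :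
    pd α (fun y => ∑ i ∈ s, F i y) x = ∑ i ∈ s, pd α (F i) x := by
  unfold pd
  rw [fderiv_fun_sum hF]
  simp

/-- Theorem 2.6 (Conservation Law): under the frame decomposition along `u` and the
conservation laws `div(f⟪∇u, Aⁱu⟫) = 0`, the Euler–Lagrange operator takes the
div–curl form `-div(f∇u) = ∑ i ∇⊥Bⁱ · ∇Υⁱ` with `∇⊥Bⁱ = -f⟪∇u, Aⁱu⟫`, `Υⁱ = Yⁱ ∘ u`. -/
theorem stmt_6 {m L : ℕ} (Ω : Set (EuclideanSpace ℝ (Fin 2))) (hΩ : IsOpen Ω)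
    (u : EuclideanSpace ℝ (Fin 2) → EuclideanSpace ℝ (Fin m))
    (hu : ContDiffOn ℝ 2 u Ω)
    (p : ℝ) (hp : 2 < p)
    (f : EuclideanSpace ℝ (Fin 2) → ℝ)
    (hf : ∀ x, f x = (1 + (‖pd 0 u x‖ ^ 2 + ‖pd 1 u x‖ ^ 2)) ^ (p / 2 - 1))
    (A : Fin L → Matrix (Fin m) (Fin m) ℝ)
    (Y : Fin L → (EuclideanSpace ℝ (Fin m) → EuclideanSpace ℝ (Fin m)))
    (hY : ∀ i, ContDiff ℝ 1 (Y i))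
    (hframe : ∀ x ∈ Ω, ∀ α : Fin 2,
      pd α u x = ∑ i, ⟪Matrix.toEuclideanLin (A i) (u x), pd α u x⟫ • Y i (u x))
    (hcons : ∀ i : Fin L, ∀ x ∈ Ω,
      pd 0 (fun y => f y * ⟪pd 0 u y, Matrix.toEuclideanLin (A i) (u y)⟫) x
        + pd 1 (fun y => f y * ⟪pd 1 u y, Matrix.toEuclideanLin (A i) (u y)⟫) x = 0) :
    ∀ x ∈ Ω,
      -(pd 0 (fun y => f y • pd 0 u y) x + pd 1 (fun y => f y • pd 1 u y) x)
        = -∑ i : Fin L,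
            ((f x * ⟪pd 0 u x, Matrix.toEuclideanLin (A i) (u x)⟫)
                • pd 0 (fun y => Y i (u y)) x
              + (f x * ⟪pd 1 u x, Matrix.toEuclideanLin (A i) (u x)⟫)
                • pd 1 (fun y => Y i (u y)) x) := by
  intro x hx
  have hΩx : Ω ∈ nhds x := hΩ.mem_nhds hx
  have hux : DifferentiableAt ℝ u x :=
    ((hu.differentiableOn (by norm_num)).differentiableAt hΩx)
  have hfd : DifferentiableAt ℝ (fderiv ℝ u) x :=
    (((hu.fderiv_of_isOpen hΩ (m := 1) (by norm_num)).differentiableOn (by norm_num)).differentiableAt hΩx)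
  have hpd : ∀ α : Fin 2, DifferentiableAt ℝ (pd α u) x := fun α => by
    have := ((ContinuousLinearMap.apply ℝ (EuclideanSpace ℝ (Fin m))
        (EuclideanSpace.single α (1 : ℝ))).differentiableAt).comp x hfd
    exact this
  have hA : ∀ i, DifferentiableAt ℝ (fun y => Matrix.toEuclideanLin (A i) (u y)) x := fun i =>
    ((LinearMap.toContinuousLinearMap (Matrix.toEuclideanLin (A i))).differentiableAt).comp x hux
  have hfdiff : DifferentiableAt ℝ f x := by
    have hfe : f = fun y => (1 + (‖pd 0 u y‖ ^ 2 + ‖pd 1 u y‖ ^ 2)) ^ (p / 2 - 1) := funext hf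
    rw [hfe]
    have hn : ∀ α : Fin 2, DifferentiableAt ℝ (fun y => ‖pd α u y‖ ^ 2) x := fun α => by
      simp only [← real_inner_self_eq_norm_sq]
      exact (hpd α).inner ℝ (hpd α)
    have hbase : DifferentiableAt ℝ
        (fun y => 1 + (‖pd 0 u y‖ ^ 2 + ‖pd 1 u y‖ ^ 2)) x :=
      (differentiableAt_const 1).add ((hn 0).add (hn 1))
    refine hbase.rpow_const (Or.inl ?_)
    positivity
  have hg : ∀ (i : Fin L) (α : Fin 2), DifferentiableAt ℝ
      (fun y => f y * ⟪pd α u y, Matrix.toEuclideanLin (A i) (u y)⟫) x := fun i α =>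
    hfdiff.mul ((hpd α).inner ℝ (hA i))
  have hYu : ∀ i, DifferentiableAt ℝ (fun y => Y i (u y)) x := fun i =>
    (((hY i).differentiable one_ne_zero) (u x)).comp x hux
  have hEq : ∀ α : Fin 2, (fun y => f y • pd α u y) =ᶠ[nhds x]
      (fun y => ∑ i, (f y * ⟪pd α u y, Matrix.toEuclideanLin (A i) (u y)⟫) • Y i (u y)) :=
    fun α => Filter.eventuallyEq_of_mem hΩx (fun y hy => by
      conv_lhs => rw [hframe y hy α]
      rw [Finset.smul_sum]
      refine Finset.sum_congr rfl fun i _ => ?_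
      rw [smul_smul, real_inner_comm])
  have hmain : ∀ α : Fin 2, pd α (fun y => f y • pd α u y) x
      = ∑ i, (pd α (fun y => f y * ⟪pd α u y, Matrix.toEuclideanLin (A i) (u y)⟫) x
            • Y i (u x)
          + (f x * ⟪pd α u x, Matrix.toEuclideanLin (A i) (u x)⟫)
            • pd α (fun y => Y i (u y)) x) := fun α => by
    rw [pd_congr (hEq α) α,
      pd_sum Finset.univ _ (fun i _ => (hg i α).fun_smul (hYu i)) α]
    exact Finset.sum_congr rfl fun i _ => pd_smul_s6 _ _ (hg i α) (hYu i) α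
  rw [hmain 0, hmain 1, neg_inj, ← Finset.sum_add_distrib]
  refine Finset.sum_congr rfl fun i _ => ?_
  have hc := hcons i x hx
  rw [show ∀ (a b : EuclideanSpace ℝ (Fin m)) (c d : EuclideanSpace ℝ (Fin m)),
      (a + c) + (b + d) = (a + b) + (c + d) from fun a b c d => by abel]
  rw [← add_smul, hc, zero_smul, zero_add]
end
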